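/- Let (M, M') = (NAK, NBK) be a cancellation pair. Then BN can be decomposed uniquely as a product of cancellation blocks: BN = 𝔹_{s_1} 𝔹_{s_2} ··· 𝔹_{s_p} for some p ≥ 1 and integers 0 ≤ s_1, ..., s_p ≤ l−2. -/

import Mathlib

open Finset Filter MvPowerSeries

noncomputable section

/-- Formal power series in two variables `q` (index 0) and `z` (index 1). -/
abbrev PS : Type := MvPowerSeries (Fin 2) ℂ

/-- The variable `q`. -/
def Qv : PS := MvPowerSeries.X 0
/-- The variable `z`. -/
def Zv : PS := MvPowerSeries.X 1

/-- Build a power series from its coefficient function. -/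
def ofCoeff (c : (Fin 2 →₀ ℕ) → ℂ) : PS := c

/-- The exponent `q^a z^c`. -/
def idx2 (a c : ℕ) : Fin 2 →₀ ℕ := Finsupp.single 0 a + Finsupp.single 1 c

/-- The q-shift operator `(S g)(q,z) = g(q,qz)`. -/
def Sop (f : PS) : PS :=
  ofCoeff fun e => if e 1 ≤ e 0 then MvPowerSeries.coeff (idx2 (e 0 - e 1) (e 1)) f else 0

/-- The window condition for `(k,l)`-configurations: `x_j + ... + x_{j+l-1} ≤ k`. -/
def windowOK (k l : ℕ) (x : ℕ → ℕ) : Prop := ∀ j, ∑ t ∈ Finset.range l, x (j + t) ≤ k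

/-- The boundary condition: `x_0 + ... + x_i ≤ b_i` for `0 ≤ i ≤ l-2`. -/
def boundOK (l : ℕ) (b : ℕ → ℕ) (x : ℕ → ℕ) : Prop :=
  ∀ i, i < l - 1 → ∑ t ∈ Finset.range (i + 1), x t ≤ b i

/-- Admissible boundary vectors: `b_0 ≤ b_1 ≤ ... ≤ b_{l-2} ≤ k`. -/
def AdmB (k l : ℕ) (b : ℕ → ℕ) : Prop :=
  (∀ i j, i ≤ j → j < l - 1 → b i ≤ b j) ∧ ∀ i, i < l - 1 → b i ≤ k

/-- The character `χ^{(N)}_{k,l;b}(q,z)`: the coefficient of `q^a z^m` counts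
`(k,l)`-configurations of length at most `N` obeying the boundary conditions,
with `Σ j·x_j = a` and `Σ x_j = m`. -/
def chiN (k l N : ℕ) (b : ℕ → ℕ) : PS :=
  ofCoeff fun e => (Nat.card {x : ℕ → ℕ //
    windowOK k l x ∧ boundOK l b x ∧ (∀ i, N ≤ i → x i = 0) ∧
    ∑ j ∈ Finset.range N, j * x j = e 0 ∧ ∑ j ∈ Finset.range N, x j = e 1} : ℂ)

/-- The limit character `χ^{(∞)}_{k,l;b}(q,z)`. -/
def chiInf (k l : ℕ) (b : ℕ → ℕ) : PS :=
  ofCoeff fun e => (Nat.card {x : ℕ → ℕ //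
    windowOK k l x ∧ boundOK l b x ∧ (∀ i, e 0 + 1 ≤ i → x i = 0) ∧
    ∑ j ∈ Finset.range (e 0 + 1), j * x j = e 0 ∧
    ∑ j ∈ Finset.range (e 0 + 1), x j = e 1} : ℂ)

/-- The shifted boundary vector `(b_1 - i, ..., b_{l-2} - i, k - i)`. -/
def shiftB (k l : ℕ) (b : ℕ → ℕ) (i : ℕ) : ℕ → ℕ :=
  fun j => if j + 1 ≤ l - 2 then b (j + 1) - i else k - i

/-- The monomial `q^{p.1} z^{p.2}`. -/
def monoPS (p : ℕ × ℕ) : PS := Qv ^ p.1 * Zv ^ p.2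

/-- Exponents in the bracket `[P_1,...,P_l] = P_1^{b_0} P_2^{b_1-b_0} ⋯ P_l^{k-b_{l-2}}`. -/
def bexp (l k : ℕ) (b : ℕ → ℕ) (i : ℕ) : ℕ :=
  if i = 0 then b 0 else if i = l - 1 then k - b (l - 2) else b i - b (i - 1)

/-- The bracket `[P_1,...,P_l]` as a function of the boundary vector `b`. -/
def bracket (l k : ℕ) (P : ℕ → ℕ × ℕ) (b : ℕ → ℕ) : PS :=
  ∏ i ∈ Finset.range l, monoPS (P i) ^ bexp l k b i

/-- q-exponent pattern of the tuples in the list defining `V_l`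
(`r` of the entries carry a factor `z`; `c 0 = 0`). -/
def patQ (l r : ℕ) (c : ℕ → ℕ) (j : ℕ) : ℕ := if j < r then c (l - r + j) else c (j - r)

/-- z-exponent pattern of the tuples in the list defining `V_l`. -/
def patZ (r j : ℕ) : ℕ := if j < r then 1 else 0

/-- The tuples `(P_1,...,P_l)` appearing in the definition of `V_l`, namely
`q^{mk} z^{nk}[q^{c_{l-r}}z, …, q^{c_{l-1}}z, 1, q^{c_1}, …, q^{c_{l-1-r}}]`
with the common factor `q^m z^n` distributed over the entries. -/
def SimpleTuple (l : ℕ) (P : ℕ → ℕ × ℕ) : Prop :=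
  ∃ m n r : ℕ, r < l ∧ ∃ c : ℕ → ℕ, c 0 = 0 ∧ Monotone c ∧
    ∀ j, j < l → P j = (m + patQ l r c j, n + patZ r j)

/-- Admissible boundary data. -/
def Adm (k l : ℕ) : Type := {b : ℕ → ℕ // AdmB k l b}

/-- The ambient space of functions of `b` with values in power series; `V_l` is a
subspace of it. -/
abbrev VV (k l : ℕ) : Type := Adm k l → PS

/-- The simple vector `f(q,z)·[P_1,...,P_l]`. -/
def simpleVal (k l : ℕ) (f : PS) (P : ℕ → ℕ × ℕ) : VV k l := fun b => f * bracket l k P b.val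

/-- The space `V_l`, spanned by simple vectors. -/
def Vspan (k l : ℕ) : Submodule ℂ (VV k l) :=
  Submodule.span ℂ {v | ∃ f P, SimpleTuple l P ∧ v = simpleVal k l f P}

/-- Power series expansion of `1/(1 - q^{w.1} z^{w.2})` where `w` may have negative
exponents, in which case `1/(1-u) = -Σ_{n≥1} u^{-n}` is used. -/
def geomPS : ℤ × ℤ → PS := fun w =>
  if 0 ≤ w.1 ∧ 0 ≤ w.2 then
    ofCoeff fun e => ({n : ℕ | (n : ℤ) * w.1 = (e 0 : ℤ) ∧ (n : ℤ) * w.2 = (e 1 : ℤ)}.ncard : ℂ)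
  else
    ofCoeff fun e =>
      -({n : ℕ | 0 < n ∧ (n : ℤ) * w.1 = -(e 0 : ℤ) ∧ (n : ℤ) * w.2 = -(e 1 : ℤ)}.ncard : ℂ)

/-- Exponents of `S(q^{-1} z P_l / P_1)`. -/
def wExpA (l : ℕ) (P : ℕ → ℕ × ℕ) : ℤ × ℤ :=
  (((P (l-1)).1 : ℤ) + ((P (l-1)).2 : ℤ) - ((P 0).1 : ℤ) - ((P 0).2 : ℤ),
   ((P (l-1)).2 : ℤ) + 1 - ((P 0).2 : ℤ))

/-- The q-shift of a monomial: `S(q^e z^d) = q^{e+d} z^d`. -/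
def Smono (p : ℕ × ℕ) : ℕ × ℕ := (p.1 + p.2, p.2)

/-- The tuple `(S P_1, S P_1, S P_2, ..., S P_{l-1})` produced by the operator `A`. -/
def tupA (P : ℕ → ℕ × ℕ) : ℕ → ℕ × ℕ := fun j => if j = 0 then Smono (P 0) else Smono (P (j - 1))

/-- The tuple `(S(q^{-1} z P_l), S P_1, ..., S P_{l-1})` produced by the operator `B`. -/
def tupB (l : ℕ) (P : ℕ → ℕ × ℕ) : ℕ → ℕ × ℕ :=
  fun j => if j = 0 then ((P (l-1)).1 + (P (l-1)).2, (P (l-1)).2 + 1) else Smono (P (j - 1))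

/-- Defining property of the operator `A`:
`A(f[P_1,…,P_l]) = S(f/(1 - q^{-1}zP_l/P_1)·[P_1,P_1,P_2,…,P_{l-1}])`. -/
def HypA (k l : ℕ) (A : Module.End ℂ (VV k l)) : Prop :=
  ∀ f P, SimpleTuple l P →
    A (simpleVal k l f P) = simpleVal k l (Sop f * geomPS (wExpA l P)) (tupA P)

/-- Defining property of the operator `B`:
`B(f[P_1,…,P_l]) = S(f/(1 - q z^{-1}P_1/P_l)·[q^{-1}zP_l,P_1,…,P_{l-1}])`. -/
def HypB (k l : ℕ) (B : Module.End ℂ (VV k l)) : Prop :=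
  ∀ f P, SimpleTuple l P →
    B (simpleVal k l f P) =
      simpleVal k l (Sop f * geomPS (-(wExpA l P).1, -(wExpA l P).2)) (tupB l P)

/-- The vector `v_ini = [1,...,1]`. -/
def vini (k l : ℕ) : VV k l := simpleVal k l 1 (fun _ => (0, 0))

/-- `(z)_n = Π_{i=0}^{n-1} (1 - q^i z)`. -/
def pochZ (n : ℕ) : PS := ∏ i ∈ Finset.range n, (1 - Qv ^ i * Zv)
/-- `(q)_t = Π_{i=1}^{t} (1 - q^i)`. -/
def pochQ (t : ℕ) : PS := ∏ i ∈ Finset.range t, (1 - Qv ^ (i + 1))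
/-- `(q^t z)_∞ = Π_{i≥0} (1 - q^{t+i} z)`, defined coefficientwise. -/
def pochInfQZ (t : ℕ) : PS :=
  ofCoeff fun e =>
    MvPowerSeries.coeff e (∏ i ∈ Finset.range (e 0 + 1), (1 - Qv ^ (t + i) * Zv))
/-- `(z)_∞ = Π_{i≥0} (1 - q^i z)`. -/
def pochInfZ : PS := pochInfQZ 0

/-- The vector `v_∞ = [1,...,1]/(z)_∞`. -/
def vinf (k l : ℕ) : VV k l := simpleVal k l pochInfZ⁻¹ (fun _ => (0, 0))

/-- Application of a monomial (word) in the operators `A` (letter `true`) and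
`B` (letter `false`) to a vector; the leftmost letter acts last read, i.e.
`C_1 C_2 ⋯ C_m v = C_1 (C_2 (⋯ (C_m v)))`. -/
def wact (k l : ℕ) (A B : Module.End ℂ (VV k l)) (w : List Bool) (v : VV k l) : VV k l :=
  w.foldr (fun c u => if c then A u else B u) v

/-- A good monomial: `C_i = A` implies `C_{i+l-1} = A` (letters 0-indexed, `true = A`). -/
def GoodWord (l : ℕ) (w : List Bool) : Prop :=
  ∀ i, i + (l - 1) < w.length → w.getD i true = true → w.getD (i + (l - 1)) true = true

/-- Canonical representative of an equivalence class of monomials: no trailing `A`s. -/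
def Reduced (w : List Bool) : Prop := w = [] ∨ w.getLast? = some false

/-- Symbols for marked vertices: `•`, `∘`, `×`. -/
inductive MSym : Type
  | dot | circ | mark
  deriving DecidableEq

/-- The `A`-arrow on (possibly marked) vertices. -/
def stepA : List MSym → List MSym
  | MSym.circ :: J => J ++ [MSym.circ]
  | MSym.dot :: _ :: J => MSym.dot :: (J ++ [MSym.circ])
  | MSym.mark :: MSym.dot :: J => MSym.dot :: (J ++ [MSym.circ])
  | MSym.mark :: MSym.circ :: J => MSym.mark :: (J ++ [MSym.circ])
  | MSym.mark :: MSym.mark :: J => MSym.dot :: (J ++ [MSym.circ])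
  | v => v

/-- The `B`-arrow on (possibly marked) vertices: rotation. -/
def stepB : List MSym → List MSym
  | [] => []
  | x :: J => J ++ [x]

/-- The marked path of the monomial `w` (extended by `A`s at positions beyond its
length), starting from `[•,…,•,×]`; `mstate l w t` is the vertex after `t` arrows. -/
def mstate (l : ℕ) (w : List Bool) : ℕ → List MSym
  | 0 => List.replicate (l - 1) MSym.dot ++ [MSym.mark]
  | t + 1 => (if w.getD t true then stepA else stepB) (mstate l w t)

/-- The `t`-th vertex of the marked path has the form `[× • J]`, i.e. the `t`-th
arrow is of type (i) or (ii). -/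
def CSrc (l : ℕ) (w : List Bool) (t : ℕ) : Prop :=
  (mstate l w t).getD 0 MSym.circ = MSym.mark ∧ (mstate l w t).getD 1 MSym.circ = MSym.dot

/-- `(N A K, N B K)` is a cancellation pair: `N A K` is good and the displayed `A`
is its cancellation `A`-arrow (the last arrow of type (i) or (ii)). -/
def CancelPair (l : ℕ) (N K : List Bool) : Prop :=
  GoodWord l (N ++ true :: K) ∧ CSrc l (N ++ true :: K) N.length ∧
    ∀ t, N.length < t → ¬ CSrc l (N ++ true :: K) t

/-- `w` is good and has a cancellation `A`-arrow. -/
def HasCA (l : ℕ) (w : List Bool) : Prop :=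
  GoodWord l w ∧ ∃ t, w.getD t true = true ∧ CSrc l w t ∧ ∀ t', t < t' → ¬ CSrc l w t'

/-- `w` is good and has a cancellation `B`-arrow. -/
def HasCB (l : ℕ) (w : List Bool) : Prop :=
  GoodWord l w ∧ ∃ t, w.getD t true = false ∧ CSrc l w t ∧ ∀ t', t < t' → ¬ CSrc l w t'

/-- The index of the cancellation arrow. -/
def cancelIdx (l : ℕ) (w : List Bool) : ℕ :=
  sInf {t | CSrc l w t ∧ ∀ t', t < t' → ¬ CSrc l w t'}

/-- Flip the letter at the cancellation arrow. -/
def flipCancel (l : ℕ) (w : List Bool) : List Bool :=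
  (w ++ List.replicate (cancelIdx l w + 1 - w.length) true).set (cancelIdx l w) false

/-- The lattice `Λ` is `ℕ → ℤ` supported on `{0,…,l-1}`; coordinates `0,…,l-2`
are the generators `b_0,…,b_{l-2}` and coordinate `l-1` is the generator `k`.
`Ma` is the map `M_a`: `b_i ↦ b_{i+1}` (`i ≤ l-3`), `b_{l-2} ↦ k`, `k ↦ k`. -/
def Ma (l : ℕ) (v : ℕ → ℤ) : ℕ → ℤ := fun j =>
  if j = 0 then 0
  else if j = l - 1 then v (l - 2) + v (l - 1)
  else if j < l - 1 then v (j - 1)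
  else 0

/-- The map `M_b`: `b_i ↦ b_{i+1} - b_0` (`i ≤ l-3`), `b_{l-2} ↦ k - b_0`, `k ↦ k`. -/
def Mb (l : ℕ) (v : ℕ → ℤ) : ℕ → ℤ := fun j =>
  if j = 0 then -(∑ i ∈ Finset.range (l - 1), v i)
  else if j = l - 1 then v (l - 2) + v (l - 1)
  else if j < l - 1 then v (j - 1)
  else 0

/-- The representative `ī ∈ {1,…,l}` of `i` modulo `l`. -/
def ibar (l : ℕ) (i : ℤ) : ℕ := ((i - 1) % (l : ℤ)).toNat + 1

/-- `ι_{i,j} = b_{ī-2} - b_{j̄-2} + k·δ(ī ≤ j̄)` (with `b_{-1} = 0`). -/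
def iotaL (l : ℕ) (i j : ℤ) : ℕ → ℤ := fun t =>
  (if 2 ≤ ibar l i ∧ t = ibar l i - 2 then 1 else 0)
  - (if 2 ≤ ibar l j ∧ t = ibar l j - 2 then 1 else 0)
  + (if ibar l i ≤ ibar l j ∧ t = l - 1 then 1 else 0)

/-- `M_{c_1} ∘ ⋯ ∘ M_{c_m}` applied to `v`, where `c_i = a` if the `i`-th letter is
`A` (`true`) and `c_i = b` otherwise. -/
def applyWord (l : ℕ) (w : List Bool) (v : ℕ → ℤ) : ℕ → ℤ :=
  w.foldr (fun c u => if c then Ma l u else Mb l u) v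

/-- The extremal configuration of the monomial `w`:
`x_i = 0` if `C_{i+1} = A` and `x_i = M_{c_1} ∘ ⋯ ∘ M_{c_i}(b_0)` if `C_{i+1} = B`
(entries beyond the length of `w` are `0`, matching equivalence of configurations). -/
def xconf (l : ℕ) (w : List Bool) (i : ℕ) : ℕ → ℤ :=
  if w.getD i true = true then 0 else applyWord l (w.take i) (iotaL l 2 1)

/-- The `A`-arrow of the summation graph (vertices as arrays of `•` = `true`,
`∘` = `false`). -/
def vstepA : List Bool → List Bool
  | false :: J => J ++ [false]
  | true :: _ :: J => true :: (J ++ [false])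
  | v => v

/-- The `B`-arrow of the summation graph: rotation. -/
def vstepB : List Bool → List Bool
  | [] => []
  | x :: J => J ++ [x]

/-- The path associated with `w` in the summation graph, starting from
`I_top = [•,…,•]`; `vstate l w t` is the vertex `I^{(t)}`. -/
def vstate (l : ℕ) (w : List Bool) (t : ℕ) : List Bool :=
  (w.take t).foldl (fun v c => if c then vstepA v else vstepB v) (List.replicate l true)

/-- The evolution of the vector part of a simple vector under one operator. -/
def tupStep (l : ℕ) (c : Bool) (P : ℕ → ℕ × ℕ) : ℕ → ℕ × ℕ :=
  if c then tupA P else tupB l P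

/-- The vector part of `M v_∞` for a word `M`. -/
def wordTuple (l : ℕ) : List Bool → ℕ → ℕ × ℕ
  | [] => fun _ => (0, 0)
  | c :: w => tupStep l c (wordTuple l w)

/-- The scalar part of `M v_∞` for a word `M`. -/
def wordScalar (l : ℕ) : List Bool → PS
  | [] => pochInfZ⁻¹
  | c :: w =>
      Sop (wordScalar l w) *
        (if c then geomPS (wExpA l (wordTuple l w))
         else geomPS (-(wExpA l (wordTuple l w)).1, -(wExpA l (wordTuple l w)).2))

/-- A cancellation block `𝔹_s = C_1 ⋯ C_{l+s}` with `C_1 = C_{s+2} = C_l = B`,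
`C_2 = ⋯ = C_{s+1} = A`, `C_{l+1} = ⋯ = C_{l+s} = A` (0-indexed positions). -/
def IsBlock (l s : ℕ) (w : List Bool) : Prop :=
  s ≤ l - 2 ∧ w.length = l + s ∧
  w.getD 0 true = false ∧ w.getD (s + 1) true = false ∧ w.getD (l - 1) true = false ∧
  (∀ i, 1 ≤ i → i ≤ s → w.getD i true = true) ∧
  (∀ i, l ≤ i → i < l + s → w.getD i true = true)

/-- The block `𝔼_i = C_2 ⋯ C_l` where `C_j = B` iff `j ∈ {σ(1),…,σ(i)}`
(1-based values of the permutation; `true = A`, `false = B`). -/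
def Eblock (l : ℕ) (σ : Equiv.Perm (Fin l)) (i : ℕ) : List Bool :=
  (List.range (l - 1)).map fun t => decide (∀ a : Fin l, (a : ℕ) < i → (σ a : ℕ) ≠ t + 1)

/-- The word `𝔼_{l-2}^{n_{l-2}} ⋯ 𝔼_1^{n_1}`. -/
def coreWord (l : ℕ) (σ : Equiv.Perm (Fin l)) (n : ℕ → ℤ) : List Bool :=
  (((List.range (l - 2)).reverse.map fun i' =>
    (List.replicate (n (i' + 1)).toNat (Eblock l σ (i' + 1))).flatten)).flatten

/-- The word `B^{n_{l-1}} 𝔼_{l-2}^{n_{l-2}} ⋯ 𝔼_1^{n_1}`; for `n_{l-1} < 0` the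
first `-n_{l-1}` letters (which are `B`s) are removed instead. -/
def theWord (l : ℕ) (σ : Equiv.Perm (Fin l)) (n : ℕ → ℤ) : List Bool :=
  if 0 ≤ n (l - 1) then List.replicate (n (l - 1)).toNat false ++ coreWord l σ n
  else (coreWord l σ n).drop (-(n (l - 1))).toNat

/-- `σ(1) = l` and `σ(l) = 1` (in 1-based notation). -/
def SigmaCond (l : ℕ) (σ : Equiv.Perm (Fin l)) : Prop :=
  (∀ a : Fin l, (a : ℕ) = 0 → (σ a : ℕ) = l - 1) ∧
  (∀ a : Fin l, (a : ℕ) = l - 1 → (σ a : ℕ) = 0)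

/-- The conditions on `n = (n_1,…,n_{l-1})`: `n_i ≥ 0` for `i ≤ l-2`,
`n_{l-1} ≥ 2 - σ(l-1)`, `n_i > 0` whenever `σ(i) < σ(i+1)`; the unused entries
are normalized to `0`. -/
def NCond (l : ℕ) (σ : Equiv.Perm (Fin l)) (n : ℕ → ℤ) : Prop :=
  (∀ i, 1 ≤ i → i ≤ l - 2 → 0 ≤ n i) ∧
  (∀ a : Fin l, (a : ℕ) = l - 2 → (2 : ℤ) - (((σ a : ℕ) : ℤ) + 1) ≤ n (l - 1)) ∧
  (∀ i, 1 ≤ i → i ≤ l - 1 → ∀ a b : Fin l, (a : ℕ) = i - 1 → (b : ℕ) = i →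
      (σ a : ℕ) < (σ b : ℕ) → 0 < n i) ∧
  (∀ i, i = 0 ∨ l - 1 < i → n i = 0)

end

/-!
Put a virtual history `B^{l-2}` in front of `BN`. In general, let `p` be the last `l - 2` letters
read (the history) and `w` the rest of the word, with `p ++ w` good, and start from the vertex
`[× • trail p]`, where `trail` records `B` as `•` and `A` as `∘`; for the history `B^{l-2}` this
is `[× • … •]`, which `B` turns into the starting vertex `[• … • ×]` of `N`.

Reading `B` sends `×` to the back. During the next `l - 2` letters `•` stays in front, since
goodness forbids a `B` under an `A` of the history. An `A` would now erase the mark, so a `B`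
follows and brings `×` back to the front, followed by the trails of the letters just read:
`∘^s •`, where `s` is the number of `A`s after the first `B`. Goodness makes the next `s` letters
`A`, which cycle the `∘`s away. This consumes exactly a block `𝔹_s`, and the vertex is again
`[× • trail p']` for the new history `p'`, so the process repeats until the word ends.
Uniqueness holds because `𝔹_s` is determined by its second `B`, at position `s + 1`.
-/

def markedStep (c : Bool) : List MSym → List MSym := if c then stepA else stepB

def markedRun (w : List Bool) (v : List MSym) : List MSym := w.foldl (fun v c => markedStep c v) v

/-- The symbol that the arrow of the letter `c` appends at the back of the vertex. -/
def trail (c : Bool) : MSym := if c then MSym.circ else MSym.dot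

@[simp] lemma trail_ne_mark (c : Bool) : trail c ≠ MSym.mark := by
  cases c <;> simp [trail]

@[simp] lemma markedRun_nil (v : List MSym) : markedRun [] v = v := rfl

@[simp] lemma markedRun_cons (c : Bool) (w : List Bool) (v : List MSym) :
    markedRun (c :: w) v = markedRun w (markedStep c v) := rfl

lemma markedRun_append (u w : List Bool) (v : List MSym) :
    markedRun (u ++ w) v = markedRun w (markedRun u v) :=
  List.foldl_append

lemma mark_not_mem_markedStep (c : Bool) {v : List MSym} (h : MSym.mark ∉ v) :
    MSym.mark ∉ markedStep c v := by
  cases c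
  · rcases v with _ | ⟨x, J⟩ <;> simp_all [markedStep, stepB]
  · match v with
    | [] | [MSym.dot] => exact h
    | MSym.circ :: J | MSym.dot :: _ :: J => simp_all [markedStep, stepA]
    | MSym.mark :: _ => simp at h

lemma mark_not_mem_markedRun (w : List Bool) {v : List MSym} (h : MSym.mark ∉ v) :
    MSym.mark ∉ markedRun w v := by
  induction w generalizing v with
  | nil => exact h
  | cons c w ih => exact ih (mark_not_mem_markedStep c h)

lemma mark_mem_of_markedRun_append {u w : List Bool} {v J : List MSym}
    (h : markedRun (u ++ w) v = MSym.mark :: J) : MSym.mark ∈ markedRun u v := by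
  by_contra hu
  rw [markedRun_append] at h
  exact mark_not_mem_markedRun w hu (h ▸ List.mem_cons_self)

lemma eq_false_of_mark_not_mem_stepA {u w : List Bool} {c : Bool} {v J : List MSym}
    (h : markedRun (u ++ c :: w) v = MSym.mark :: J) (hA : MSym.mark ∉ stepA (markedRun u v)) :
    c = false := by
  cases c
  · rfl
  · have := mark_mem_of_markedRun_append (u := u ++ [true]) (w := w) (by simpa using h)
    rw [markedRun_append] at this
    exact absurd this hA

lemma mstate_eq_markedRun (l : ℕ) (w : List Bool) {t : ℕ} (ht : t ≤ w.length) :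
    mstate l w t = markedRun (w.take t) (List.replicate (l - 1) MSym.dot ++ [MSym.mark]) := by
  induction t with
  | zero => rfl
  | succ t ih =>
    rw [mstate, ih (by omega), List.take_add_one, List.getElem?_eq_getElem (by omega),
      Option.toList_some, markedRun_append, List.getD_eq_getElem _ _ (by omega)]
    rfl

lemma CSrc.exists_mstate_eq {l : ℕ} {w : List Bool} {t : ℕ} (h : CSrc l w t) :
    ∃ J, mstate l w t = MSym.mark :: MSym.dot :: J := by
  obtain ⟨h₀, h₁⟩ := h
  match hv : mstate l w t, h₀, h₁ with
  | x :: y :: J, h₀, h₁ => exact ⟨J, by simp_all⟩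
  | [], h₀, _ | [_], _, h₁ => simp at h₀ h₁

lemma markedRun_dot_cons {p u : List Bool}
    (h : List.Forall₂ (fun a c => a = true → c = true) p u) (R : List MSym) :
    markedRun u (MSym.dot :: (p.map trail ++ R)) = MSym.dot :: (R ++ u.map trail) := by
  induction h generalizing R with
  | nil => simp
  | @cons a c p u hac _ ih =>
    have hstep : markedStep c (MSym.dot :: (trail a :: (p.map trail ++ R))) =
        MSym.dot :: (p.map trail ++ (R ++ [trail c])) := by
      cases c
      · cases a <;> simp_all [markedStep, stepB, trail]
      · simp [markedStep, stepA, trail]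
    simp [hstep, ih]

lemma markedRun_replicate_true_mark {t s : ℕ} (h : t ≤ s) (R : List MSym) :
    markedRun (List.replicate t true) (MSym.mark :: (List.replicate s MSym.circ ++ R)) =
      MSym.mark :: (List.replicate (s - t) MSym.circ ++ R ++ List.replicate t MSym.circ) := by
  induction t with
  | zero => simp
  | succ t ih =>
    obtain ⟨r, hr⟩ : ∃ r, s - t = r + 1 := ⟨s - t - 1, by omega⟩
    rw [List.replicate_succ', markedRun_append, ih (by omega), hr, List.replicate_succ,
      show s - (t + 1) = r by omega]
    simp [markedStep, stepA, List.replicate_succ']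

lemma goodWord_iff {l : ℕ} {w : List Bool} :
    GoodWord l w ↔ ∀ i (h : i + (l - 1) < w.length), w[i] = true → w[i + (l - 1)] = true := by
  refine forall_congr' fun i => forall_congr' fun h => ?_
  rw [List.getD_eq_getElem _ _ (by omega), List.getD_eq_getElem _ _ h]

lemma GoodWord.drop {l : ℕ} {w : List Bool} (h : GoodWord l w) (n : ℕ) :
    GoodWord l (w.drop n) := by
  rw [goodWord_iff] at h ⊢
  intro i hi hw
  simp only [List.getElem_drop] at hw ⊢
  simpa [Nat.add_assoc] using h _ (by simp at hi; omega) hw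

lemma GoodWord.of_append {l : ℕ} {u w : List Bool} (h : GoodWord l (u ++ w)) : GoodWord l u := by
  rw [goodWord_iff] at h ⊢
  intro i hi hu
  have := h i (by simp; omega) (by rwa [List.getElem_append_left])
  rwa [List.getElem_append_left] at this

lemma GoodWord.replicate_false_append {l : ℕ} {w : List Bool} (h : GoodWord l w) (n : ℕ) :
    GoodWord l (List.replicate n false ++ w) := by
  rw [goodWord_iff] at h ⊢
  intro i hi hw
  simp only [List.length_append, List.length_replicate] at hi
  have hn : n ≤ i := by
    by_contra hlt
    rw [List.getElem_append_left (by simp; omega)] at hw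
    simp at hw
  rw [List.getElem_append_right (by simp; omega)] at hw ⊢
  simp only [List.length_replicate] at hw ⊢
  simpa [show i + (l - 1) - n = i - n + (l - 1) by omega] using h _ (by omega) hw

lemma GoodWord.getElem_right {x y : List Bool} (h : GoodWord (x.length + 1) (x ++ y)) {i : ℕ}
    (hx : i < x.length) (hy : i < y.length) (hxi : x[i] = true) : y[i] = true := by
  rw [goodWord_iff] at h
  have := h i (by simp; omega) (by rwa [List.getElem_append_left])
  simpa [List.getElem_append_right, show i + x.length - x.length = i by omega] using this

lemma GoodWord.forall₂_take {x y : List Bool} (h : GoodWord (x.length + 1) (x ++ y))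
    (hy : y.length ≤ x.length) :
    List.Forall₂ (fun a c => a = true → c = true) (x.take y.length) y := by
  rw [List.forall₂_iff_get]
  refine ⟨by simp; omega, fun i h₁ h₂ => ?_⟩
  simp only [List.get_eq_getElem, List.getElem_take]
  exact h.getElem_right (by omega) h₂

lemma exists_replicate_true_append {x : List Bool} (h : false ∈ x) :
    ∃ s v, x = List.replicate s true ++ false :: v := by
  induction x with
  | nil => simp at h
  | cons c x ih =>
    cases c
    · exact ⟨0, x, rfl⟩
    · obtain ⟨s, v, rfl⟩ := ih (by simpa using h)
      exact ⟨s + 1, v, rfl⟩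

lemma IsBlock.ne_nil {l s : ℕ} {b : List Bool} (h : IsBlock l s b) : b ≠ [] := by
  rintro rfl
  simp [IsBlock] at h

lemma IsBlock.eq_of_append_eq {l s₁ s₂ : ℕ} {b₁ b₂ f₁ f₂ : List Bool} (h₁ : IsBlock l s₁ b₁)
    (h₂ : IsBlock l s₂ b₂) (he : b₁ ++ f₁ = b₂ ++ f₂) : b₁ = b₂ ∧ f₁ = f₂ := by
  wlog hs : s₁ ≤ s₂ generalizing s₁ s₂ b₁ b₂ f₁ f₂
  · exact (this h₂ h₁ he.symm (by omega)).imp Eq.symm Eq.symm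
  obtain ⟨-, hlen₁, -, hB₁, -, -, -⟩ := h₁
  obtain ⟨hs₂, hlen₂, -, -, -, hA₂, -⟩ := h₂
  -- the first `B` after the initial one sits at position `s + 1`
  have hs' : s₁ = s₂ := by
    by_contra hne
    have hB : (b₁ ++ f₁).getD (s₁ + 1) true = false := by
      rwa [List.getD_append _ _ _ _ (by omega)]
    rw [he, List.getD_append _ _ _ _ (by omega), hA₂ _ (by omega) (by omega)] at hB
    exact Bool.noConfusion hB
  exact List.append_inj he (by omega)

lemma eq_of_flatten_eq_of_forall_isBlock {l : ℕ} :
    ∀ {bs₁ bs₂ : List (List Bool)}, (∀ b ∈ bs₁, ∃ s, IsBlock l s b) →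
      (∀ b ∈ bs₂, ∃ s, IsBlock l s b) → bs₁.flatten = bs₂.flatten → bs₁ = bs₂
  | [], [], _, _, _ => rfl
  | [], b :: _, _, h₂, he => by
    obtain ⟨s, hb⟩ := h₂ b List.mem_cons_self
    simp_all [hb.ne_nil]
  | b :: _, [], h₁, _, he => by
    obtain ⟨s, hb⟩ := h₁ b List.mem_cons_self
    simp_all [hb.ne_nil]
  | b₁ :: bs₁, b₂ :: bs₂, h₁, h₂, he => by
    obtain ⟨s₁, hb₁⟩ := h₁ b₁ List.mem_cons_self
    obtain ⟨s₂, hb₂⟩ := h₂ b₂ List.mem_cons_self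
    obtain ⟨rfl, hf⟩ := hb₁.eq_of_append_eq hb₂ he
    rw [eq_of_flatten_eq_of_forall_isBlock (fun b hb => h₁ b (List.mem_cons_of_mem _ hb))
      (fun b hb => h₂ b (List.mem_cons_of_mem _ hb)) hf]

lemma isBlock_of_append_eq {L s : ℕ} {u v : List Bool} (hu : u.length = L)
    (hsv : u ++ [false] = List.replicate s true ++ false :: v) :
    IsBlock (L + 2) s (false :: u ++ false :: List.replicate s true) := by
  have hlen := congrArg List.length hsv
  simp only [List.length_append, List.length_cons, List.length_replicate, List.length_nil] at hlen
  have hb : false :: u ++ false :: List.replicate s true =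
      false :: (List.replicate s true ++ false :: v) ++ List.replicate s true := by
    rw [← hsv]; simp
  refine ⟨by omega, by simp [hu]; omega, rfl, ?_, ?_, fun i hi₁ hi₂ => ?_, fun i hi₁ hi₂ => ?_⟩
  · rw [hb, List.getD_append _ _ _ _ (by simp)]
    simp
  · simp [hu]
  · obtain ⟨j, rfl⟩ : ∃ j, i = j + 1 := ⟨i - 1, by omega⟩
    rw [hb, List.getD_append _ _ _ _ (by simp; omega), List.getD_cons_succ,
      List.getD_append _ _ _ _ (by simp; omega)]
    simp
  · obtain ⟨j, rfl⟩ : ∃ j, i = L + 2 + j := ⟨i - (L + 2), by omega⟩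
    rw [List.getD_append_right _ _ _ _ (by simp; omega), List.length_cons, hu,
      show L + 2 + j - (L + 1) = j + 1 by omega, List.getD_cons_succ]
    simp

lemma eq_replicate_append_of_markedRun {s : ℕ} {y : List Bool} {R J : List MSym}
    (hy : ∀ i (h : i < y.length), i < s → y[i] = true)
    (hfin : markedRun y (MSym.mark :: (List.replicate s MSym.circ ++ MSym.dot :: R)) =
      MSym.mark :: MSym.dot :: J) :
    ∃ y', y = List.replicate s true ++ y' := by
  have htake : y.take s = List.replicate (y.take s).length true :=
    List.eq_replicate_iff.mpr ⟨rfl, fun c hc => by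
      obtain ⟨i, hi, rfl⟩ := List.getElem_of_mem hc
      simp only [List.length_take] at hi
      simpa using hy i (by omega) (by omega)⟩
  by_cases hs : s ≤ y.length
  · refine ⟨y.drop s, ?_⟩
    rw [← List.take_append_drop s y, htake]
    simp [hs]
  · -- the letters run out while the second entry is still `∘`
    have hy' : y = List.replicate y.length true := by
      simpa [List.take_of_length_le (by omega : y.length ≤ s)] using htake
    rw [hy', markedRun_replicate_true_mark (by omega),
      show s - y.length = (s - y.length - 1) + 1 by omega, List.replicate_succ] at hfin
    simp at hfin

lemma exists_markedRun_mark_cons {L : ℕ} {p w : List Bool} {J : List MSym} (hp : p.length = L)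
    (hgood : GoodWord (L + 2) (p ++ w)) (hw : w ≠ [])
    (hfin : markedRun w (MSym.mark :: MSym.dot :: p.map trail) = MSym.mark :: MSym.dot :: J) :
    ∃ u rest, u.length = L ∧ w = false :: u ++ false :: rest ∧
      markedRun (false :: u ++ [false]) (MSym.mark :: MSym.dot :: p.map trail) =
        MSym.mark :: (u ++ [false]).map trail := by
  obtain ⟨c, w₁, rfl⟩ := List.exists_cons_of_ne_nil hw
  obtain rfl : c = false :=
    eq_false_of_mark_not_mem_stepA (u := []) hfin (by simp [stepA])
  set u := w₁.take L
  set rest := w₁.drop L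
  have hw₁ : w₁ = u ++ rest := (List.take_append_drop L w₁).symm
  have hgood' : GoodWord ((p ++ [false]).length + 1) ((p ++ [false]) ++ u) := by
    refine GoodWord.of_append (w := rest) ?_
    simpa [hp, ← hw₁] using hgood
  have hhead : markedRun (false :: u) (MSym.mark :: MSym.dot :: p.map trail) =
      MSym.dot :: ((p.drop u.length).map trail ++ [MSym.mark] ++ u.map trail) := by
    have h := markedRun_dot_cons (hgood'.forall₂_take (by simp [u]; omega))
      ((p.drop u.length).map trail ++ [MSym.mark])
    rw [List.take_append_of_le_length (by simp [u]; omega)] at h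
    rw [markedRun_cons, ← h, ← List.append_assoc, ← List.map_append, List.take_append_drop]
    rfl
  obtain ⟨c, rest', hrest⟩ : ∃ c rest', rest = c :: rest' := by
    rcases hr : rest with _ | ⟨c, rest'⟩
    · rw [hw₁, hr, List.append_nil, hhead] at hfin
      simp at hfin
    · exact ⟨c, rest', rfl⟩
  have hu : u.length = L := by
    have := congrArg List.length hrest
    simp only [rest, List.length_drop, List.length_cons] at this
    simp [u]
    omega
  rw [hu, List.drop_eq_nil_of_le (by omega), List.map_nil, List.nil_append] at hhead
  have hsplit : false :: w₁ = (false :: u) ++ c :: rest' := by rw [hw₁, hrest]; simp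
  obtain rfl : c = false :=
    eq_false_of_mark_not_mem_stepA (hsplit ▸ hfin) (by rw [hhead]; simp [stepA])
  refine ⟨u, rest', hu, by simpa using hsplit, ?_⟩
  rw [markedRun_append, hhead]
  simp [markedStep, stepB, trail]

theorem exists_isBlock_prefix {L : ℕ} {p w : List Bool} {J : List MSym} (hp : p.length = L)
    (hgood : GoodWord (L + 2) (p ++ w)) (hw : w ≠ [])
    (hfin : markedRun w (MSym.mark :: MSym.dot :: p.map trail) = MSym.mark :: MSym.dot :: J) :
    ∃ s b w', IsBlock (L + 2) s b ∧ w = b ++ w' ∧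
      markedRun b (MSym.mark :: MSym.dot :: p.map trail) =
        MSym.mark :: MSym.dot :: (b.drop (s + 2)).map trail := by
  obtain ⟨u, rest, hu, rfl, hstate⟩ := exists_markedRun_mark_cons hp hgood hw hfin
  obtain ⟨s, v, hsv⟩ := exists_replicate_true_append (x := u ++ [false]) (by simp)
  have hsL : s ≤ L := by
    have := congrArg List.length hsv
    simp at this
    omega
  have hA : ∀ i (h : i < rest.length), i < s → rest[i] = true := by
    have hg : GoodWord ((u ++ [false]).length + 1) ((u ++ [false]) ++ rest) := by
      have := hgood.drop (p ++ [false]).length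
      rw [show p ++ (false :: u ++ false :: rest) = (p ++ [false]) ++ ((u ++ [false]) ++ rest)
        by simp, List.drop_left] at this
      simpa [hu] using this
    intro i hi his
    refine hg.getElem_right (by simp; omega) hi ?_
    rw [List.getElem_of_eq hsv]
    simp [List.getElem_append_left, his]
  have hsplit : false :: u ++ false :: rest = (false :: u ++ [false]) ++ rest := by simp
  have hrun : markedRun rest
      (MSym.mark :: (List.replicate s MSym.circ ++ MSym.dot :: v.map trail)) =
        MSym.mark :: MSym.dot :: J := by
    rw [hsplit, markedRun_append, hstate, hsv] at hfin
    simpa [trail] using hfin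
  obtain ⟨w', rfl⟩ := eq_replicate_append_of_markedRun hA hrun
  refine ⟨s, false :: u ++ false :: List.replicate s true, w', isBlock_of_append_eq hu hsv,
    by simp, ?_⟩
  have hdrop : (false :: u ++ false :: List.replicate s true).drop (s + 2) =
      v ++ List.replicate s true := by
    rw [show false :: u ++ false :: List.replicate s true =
      false :: ((u ++ [false]) ++ List.replicate s true) by simp, hsv]
    simp [List.drop_append]
  rw [hdrop, show false :: u ++ false :: List.replicate s true =
      (false :: u ++ [false]) ++ List.replicate s true by simp, markedRun_append, hstate, hsv]
  simp [trail, markedRun_replicate_true_mark]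

theorem exists_isBlock_decomposition {L : ℕ} {p w : List Bool} {J : List MSym}
    (hp : p.length = L) (hgood : GoodWord (L + 2) (p ++ w)) (hw : w ≠ [])
    (hfin : markedRun w (MSym.mark :: MSym.dot :: p.map trail) = MSym.mark :: MSym.dot :: J) :
    ∃ bs : List (List Bool), bs ≠ [] ∧ (∀ b ∈ bs, ∃ s, IsBlock (L + 2) s b) ∧ bs.flatten = w := by
  obtain ⟨s, b, w', hb, rfl, hrun⟩ := exists_isBlock_prefix hp hgood hw hfin
  by_cases hw' : w' = []
  · subst hw'
    exact ⟨[b], by simp, by simpa using ⟨s, hb⟩, by simp⟩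
  have hlen : b.length = L + 2 + s := hb.2.1
  have hp' : (b.drop (s + 2)).length = L := by simp; omega
  have hgood' : GoodWord (L + 2) (b.drop (s + 2) ++ w') := by
    have := hgood.drop (p.length + (s + 2))
    rwa [← List.drop_drop, List.drop_left, List.drop_append_of_le_length (by omega)] at this
  rw [markedRun_append, hrun] at hfin
  obtain ⟨bs, -, hbs, rfl⟩ := exists_isBlock_decomposition hp' hgood' hw' hfin
  refine ⟨b :: bs, by simp, ?_, by simp⟩
  intro c hc
  rcases List.mem_cons.mp hc with rfl | hc
  · exact ⟨s, hb⟩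
  · exact hbs c hc
termination_by w.length
decreasing_by subst_vars; simp; omega

/-- If `(NAK, NBK)` is a cancellation pair, then `BN` decomposes uniquely as a
product of cancellation blocks `BN = 𝔹_{s_1} ⋯ 𝔹_{s_p}` with `p ≥ 1` and
`0 ≤ s_1, …, s_p ≤ l-2`. -/
theorem stmt18 (l : ℕ) (hl : 2 ≤ l) (N K : List Bool) (h : CancelPair l N K) :
    ∃! bs : List (List Bool),
      0 < bs.length ∧ (∀ blk ∈ bs, ∃ s, IsBlock l s blk) ∧ bs.flatten = false :: N := by
  obtain ⟨L, rfl⟩ : ∃ L, l = L + 2 := ⟨l - 2, by omega⟩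
  obtain ⟨hgood, hsrc, -⟩ := h
  obtain ⟨J, hJ⟩ := hsrc.exists_mstate_eq
  have hrun : markedRun (false :: N) (MSym.mark :: MSym.dot :: (List.replicate L false).map trail) =
      MSym.mark :: MSym.dot :: J := by
    rw [← hJ, mstate_eq_markedRun _ _ (by simp), List.take_left]
    simp [markedStep, stepB, trail, List.replicate_succ]
  have hgood' : GoodWord (L + 2) (List.replicate L false ++ false :: N) := by
    simpa [List.replicate_succ'] using (hgood.of_append.replicate_false_append (L + 1))
  obtain ⟨bs, hne, hblk, hflat⟩ :=
    exists_isBlock_decomposition (by simp) hgood' (List.cons_ne_nil _ _) hrun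
  refine ⟨bs, ⟨List.length_pos_iff.mpr hne, hblk, hflat⟩, fun bs' ⟨_, hblk', hflat'⟩ => ?_⟩
  exact eq_of_flatten_eq_of_forall_isBlock hblk' hblk (hflat'.trans hflat.symm)
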